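/- arXiv:1402.1156 — 8 statements merged into one kernel-verified Lean document; each statement's English description precedes it below -/
import Mathlib

section
/- If a cellular game G satisfies G ⊨ a ∥ a for some integer a, then G ⊨ a ∥ b for all integers b (soundness of the Reflexivity axiom). -/
structure CellularGame where
  S : Type
  u : S → S → S → ℝ

def NashEq (G : CellularGame) (e : ℤ → G.S) : Prop :=
  ∀ (i : ℤ) (s : G.S), G.u (e (i-1)) s (e (i+1)) ≤ G.u (e (i-1)) (e i) (e (i+1))

def Ichg (G : CellularGame) (a b : ℤ) : Prop :=
  ∀ e₁ e₂ : ℤ → G.S, NashEq G e₁ → NashEq G e₂ →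
    ∃ e : ℤ → G.S, NashEq G e ∧ e a = e₁ a ∧ e b = e₂ b

theorem reflexivity_sound (G : CellularGame) (a : ℤ) (h : Ichg G a a) :
    ∀ b : ℤ, Ichg G a b := by
  intro b e₁ e₂ h₁ h₂
  obtain ⟨e, _, he₁, he₂⟩ := h e₁ e₂ h₁ h₂
  exact ⟨e₂, h₂, he₂ ▸ he₁ ▸ rfl, rfl⟩
end

section
/- If a cellular game G satisfies G ⊨ a ∥ b, then G ⊨ (a + c) ∥ (b + c) for all integers a, b, c (soundness of the Homogeneity axiom). -/
lemma nash_shift (G : CellularGame) (e : ℤ → G.S) (c : ℤ) (he : NashEq G e) :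
    NashEq G (fun i => e (i + c)) := by
  intro i s
  have := he (i + c) s
  simpa [show i - 1 + c = i + c - 1 by ring, show i + 1 + c = i + c + 1 by ring] using this

theorem homogeneity_sound (G : CellularGame) (a b : ℤ) (h : Ichg G a b) :
    ∀ c : ℤ, Ichg G (a + c) (b + c) := by
  intro c e₁ e₂ h₁ h₂
  obtain ⟨e, hN, ha, hb⟩ := h (fun i => e₁ (i + c)) (fun i => e₂ (i + c))
    (nash_shift G e₁ c h₁) (nash_shift G e₂ c h₂)
  refine ⟨fun i => e (i + -c), ?_, ?_, ?_⟩
  · exact nash_shift G e (-c) hN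
  · simpa using ha
  · simpa using hb
end

section
/- A strategy profile ⟨e_k⟩_{k∈ℤ} is a Nash equilibrium of game G₁ if and only if e_k − e_{k−1} ∈ {[0]₃, [1]₃} for each k ∈ ℤ. -/
def G1 : CellularGame := ⟨ZMod 3, fun x y _ => if y ≠ x + 2 then 1 else 0⟩

lemma zmod3_key (a b : ZMod 3) : b ≠ a + 2 ↔ b - a = 0 ∨ b - a = 1 := by
  revert a b; decide

theorem g1_ne (e : ℤ → ZMod 3) :
    NashEq G1 e ↔ ∀ k : ℤ, e k - e (k-1) ∈ ({0, 1} : Set (ZMod 3)) := by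
  have hne : ∀ k : ℤ, (e k ≠ e (k-1) + 2) ↔ e k - e (k-1) ∈ ({0,1} : Set (ZMod 3)) := by
    intro k
    simpa [Set.mem_insert_iff] using zmod3_key (e (k-1)) (e k)
  constructor
  · intro h k
    rw [← hne]
    intro hcon
    have h2 : (e (k-1) : ZMod 3) ≠ e (k-1) + 2 := by
      intro h'
      have : (2 : ZMod 3) = 0 := by
        have := (add_eq_left (a := e (k-1)) (b := 2)).mp h'.symm
        exact this
      exact absurd this (by decide)
    have := h k (e (k-1))
    simp only [G1, if_pos h2, if_neg (not_not.mpr hcon)] at this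
    linarith
  · intro h i s
    have hi := (hne i).mpr (h i)
    simp only [G1, if_pos hi]
    split <;> norm_num
end

section
/- For the cellular game G₁, G₁ ⊨ a ∥ b if and only if |a − b| > 1. -/
lemma ne_self_add_two (c : ZMod 3) : c ≠ c + 2 := by revert c; decide

lemma nash_iff (e : ℤ → ZMod 3) : NashEq G1 e ↔ ∀ i : ℤ, e i ≠ e (i-1) + 2 := by
  constructor
  · intro h i heq
    have h2 : (if e (i-1) ≠ e (i-1) + 2 then (1:ℝ) else 0) ≤
        (if e i ≠ e (i-1) + 2 then (1:ℝ) else 0) := h i (e (i-1))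
    rw [if_pos (ne_self_add_two _), if_neg (not_not_intro heq)] at h2
    norm_num at h2
  · intro h i s
    have key : ∀ s' : ZMod 3, (if s' ≠ e (i-1) + 2 then (1:ℝ) else 0) ≤
        (if e i ≠ e (i-1) + 2 then (1:ℝ) else 0) := by
      intro s'
      rw [if_pos (h i)]
      split <;> norm_num
    exact key s

lemma const_nash (c : ZMod 3) : NashEq G1 (fun _ => c) := by
  rw [nash_iff]; intro i; exact ne_self_add_two c

lemma build (p q : ℤ) (hpq : p + 1 < q) (x y : ZMod 3) :
    ∃ e : ℤ → ZMod 3, NashEq G1 e ∧ e p = x ∧ e q = y := by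
  obtain ⟨z, hz1, hz2⟩ : ∃ z : ZMod 3, z ≠ x + 2 ∧ y ≠ z + 2 := by revert x y; decide
  refine ⟨fun i => if i ≤ p then x else if i < q then z else y, ?_, by simp,
    by simp [show ¬ q ≤ p by omega, lt_irrefl]⟩
  rw [nash_iff]
  intro i
  show (if i ≤ p then x else if i < q then z else y) ≠
    (if i - 1 ≤ p then x else if i - 1 < q then z else y) + 2
  split_ifs <;> first
    | exact ne_self_add_two _
    | exact hz1
    | exact hz2
    | omega

theorem g1_inter (a b : ℤ) : Ichg G1 a b ↔ 1 < |a - b| := by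
  constructor
  · intro hI
    by_contra h
    rw [not_lt, abs_le] at h
    have hcases : a - b = -1 ∨ a - b = 0 ∨ a - b = 1 := by omega
    rcases hcases with h1 | h1 | h1
    · -- b = a + 1
      obtain ⟨e, he, hea, heb⟩ := hI (fun _ => (0 : ZMod 3)) (fun _ => (2 : ZMod 3)) (const_nash 0) (const_nash 2)
      have := (nash_iff e).mp he b
      rw [show b - 1 = a by omega, hea, heb] at this
      exact this (show _ = _ by decide)
    · -- a = b
      obtain ⟨e, he, hea, heb⟩ := hI (fun _ => (0 : ZMod 3)) (fun _ => (1 : ZMod 3)) (const_nash 0) (const_nash 1)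
      rw [show b = a by omega, hea] at heb
      exact absurd heb (show (0 : ZMod 3) ≠ 1 by decide)
    · -- a = b + 1
      obtain ⟨e, he, hea, heb⟩ := hI (fun _ => (2 : ZMod 3)) (fun _ => (0 : ZMod 3)) (const_nash 2) (const_nash 0)
      have := (nash_iff e).mp he a
      rw [show a - 1 = b by omega, hea, heb] at this
      exact this (show _ = _ by decide)
  · intro h e₁ e₂ h1 h2
    rw [lt_abs] at h
    rcases h with h | h
    · -- b + 1 < a
      obtain ⟨e, he, heb, hea⟩ := build b a (by omega) (e₂ b) (e₁ a)
      exact ⟨e, he, hea, heb⟩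
    · -- a + 1 < b
      obtain ⟨e, he, hea, heb⟩ := build a b (by omega) (e₁ a) (e₂ b)
      exact ⟨e, he, hea, heb⟩
end

section
/- For n ≥ 3, a strategy profile of the game G_n is a Nash equilibrium if and only if it is semi-perfect at every player i ∈ ℤ. -/
abbrev GnS (n : ℕ) := Fin (n-1) → ZMod (n+1) × ZMod (n+1)

def GnCond (n : ℕ) (x y z : GnS n) : Prop :=
  (∀ h0 : 0 < n - 1, (y ⟨0, h0⟩).1 = 0) ∧
  (∀ (j : ℕ) (h : j + 1 < n - 1),
    (y ⟨j+1, h⟩).2 + (z ⟨j+1, h⟩).1 - (x ⟨j, Nat.lt_of_succ_lt h⟩).2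
      - (y ⟨j, Nat.lt_of_succ_lt h⟩).1 ∈ ({0, 1} : Set (ZMod (n+1)))) ∧
  (∀ h : n - 2 < n - 1,
    (z ⟨0, lt_of_le_of_lt (Nat.zero_le _) h⟩).2 - (x ⟨n-2, h⟩).2 - (y ⟨n-2, h⟩).1
      ∈ ({0, 1} : Set (ZMod (n+1))))

open Classical in
noncomputable def GnGame (n : ℕ) : CellularGame :=
  ⟨GnS n, fun x y z => if GnCond n x y z then 1 else 0⟩

def SemiPerfect (n : ℕ) (s : ℤ → GnS n) (i : ℤ) : Prop :=
  GnCond n (s (i-1)) (s i) (s (i+1))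

def PerfectAt (n : ℕ) (s : ℤ → GnS n) (i : ℤ) : Prop :=
  (∀ h0 : 0 < n - 1, (s i ⟨0, h0⟩).1 = 0) ∧
  (∀ (j : ℕ) (h : j + 1 < n - 1),
    (s (i-1) ⟨j, Nat.lt_of_succ_lt h⟩).2 + (s i ⟨j, Nat.lt_of_succ_lt h⟩).1
      = (s i ⟨j+1, h⟩).2 + (s (i+1) ⟨j+1, h⟩).1) ∧
  (∀ h : n - 2 < n - 1,
    (s (i-1) ⟨n-2, h⟩).2 + (s i ⟨n-2, h⟩).1
      = (s (i+1) ⟨0, lt_of_le_of_lt (Nat.zero_le _) h⟩).2)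


lemma exists_best (n : ℕ) (hn : 3 ≤ n) (x z : GnS n) : ∃ y : GnS n, GnCond n x y z := by
  have h2 : n - 2 < n - 1 := by omega
  refine ⟨fun j => ⟨if (j : ℕ) = n - 2 then (z ⟨0, by omega⟩).2 - (x ⟨n-2, h2⟩).2 else 0,
    (x ⟨(j : ℕ) - 1, lt_of_le_of_lt (Nat.sub_le _ _) j.isLt⟩).2 - (z j).1⟩, ?_, ?_, ?_⟩
  · intro h0
    simp only
    rw [if_neg (by omega)]
  · intro j h
    simp only
    rw [if_neg (by omega : ¬ (j = n - 2))]
    left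
    show (x ⟨j + 1 - 1, _⟩).2 - (z ⟨j+1, h⟩).1 + (z ⟨j+1, h⟩).1
      - (x ⟨j, _⟩).2 - 0 = 0
    have : (⟨j + 1 - 1, lt_of_le_of_lt (Nat.sub_le _ _) (Fin.mk j.succ h).isLt⟩ : Fin (n-1))
        = ⟨j, Nat.lt_of_succ_lt h⟩ := by
      ext; simp
    rw [this]; ring
  · intro h
    simp only
    rw [if_pos trivial]
    left
    have : (⟨0, by omega⟩ : Fin (n-1)) = ⟨0, lt_of_le_of_lt (Nat.zero_le _) h⟩ := rfl
    rw [this]; ring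

theorem gn_ne (n : ℕ) (hn : 3 ≤ n) (e : ℤ → (GnGame n).S) :
    NashEq (GnGame n) e ↔ ∀ i : ℤ, SemiPerfect n e i := by
  constructor
  · intro hne i
    obtain ⟨y, hy⟩ := exists_best n hn (e (i-1)) (e (i+1))
    have h1 := hne i y
    show GnCond n (e (i-1)) (e i) (e (i+1))
    by_contra hc
    simp only [GnGame, if_pos hy, if_neg hc] at h1
    linarith
  · intro h i s
    simp only [GnGame]
    have hi : GnCond n (e (i-1)) (e i) (e (i+1)) := h i
    rw [if_pos hi]
    split <;> norm_num
end

section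
/- Let n ≥ 3 and let ⟨x^i⟩_{i∈ℤ} be a Nash equilibrium of G_n with x^a_{1,2} = [0]. Then for each 0 ≤ k ≤ n−2, x^{a+k}_{k+1,2} + x^{a+k+1}_{k+1,1} ∈ {[0], [1], ..., [k]} in ℤ/(n+1)ℤ. -/
def wc (n : ℕ) (x z : GnS n) : Fin (n-1) → ZMod (n+1) := fun j =>
  if j.1 = 0 then 0
  else if h : j.1 = n-2 then
    (z ⟨0, lt_of_le_of_lt (Nat.zero_le _) j.2⟩).2 - (x ⟨n-2, h ▸ j.2⟩).2
  else 0

def wit (n : ℕ) (x z : GnS n) : GnS n := fun j =>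
  (wc n x z j,
   if j.1 = 0 then 0
   else (x ⟨j.1 - 1, by have := j.2; omega⟩).2 + wc n x z ⟨j.1 - 1, by have := j.2; omega⟩
     - (z j).1)

lemma wit_cond (n : ℕ) (hn : 3 ≤ n) (x z : GnS n) : GnCond n x (wit n x z) z := by
  refine ⟨?_, ?_, ?_⟩
  · intro h0; simp [wit, wc]
  · intro j h
    have hw2 : (wit n x z ⟨j+1, h⟩).2
        = (x ⟨j, Nat.lt_of_succ_lt h⟩).2 + wc n x z ⟨j, Nat.lt_of_succ_lt h⟩
          - (z ⟨j+1, h⟩).1 := by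
      simp [wit]
    have hw1 : (wit n x z ⟨j, Nat.lt_of_succ_lt h⟩).1
        = wc n x z ⟨j, Nat.lt_of_succ_lt h⟩ := rfl
    rw [hw2, hw1]
    left; ring
  · intro h
    have h1 : (wit n x z ⟨n-2, h⟩).1 = wc n x z ⟨n-2, h⟩ := rfl
    rw [h1]
    have hne : n - 2 ≠ 0 := by omega
    have : wc n x z ⟨n-2, h⟩ = (z ⟨0, lt_of_le_of_lt (Nat.zero_le _) h⟩).2
        - (x ⟨n-2, h⟩).2 := by
      simp [wc, hne]
    rw [this]
    left; ring

lemma nash_semiperfect (n : ℕ) (hn : 3 ≤ n) (e : ℤ → (GnGame n).S)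
    (he : NashEq (GnGame n) e) (i : ℤ) :
    GnCond n (e (i-1)) (e i) (e (i+1)) := by
  by_contra h
  have h1 := wit_cond n hn (e (i-1)) (e (i+1))
  have h2 := he i (wit n (e (i-1)) (e (i+1)))
  simp only [GnGame] at h2
  rw [if_pos h1, if_neg h] at h2
  linarith

theorem gn_diagonal (n : ℕ) (hn : 3 ≤ n) (e : ℤ → (GnGame n).S)
    (he : NashEq (GnGame n) e) (a : ℤ)
    (ha : (e a ⟨0, by omega⟩).2 = 0) :
    ∀ k : ℕ, k ≤ n - 2 → ∀ hk : k < n - 1,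
      ∃ m : ℕ, m ≤ k ∧
        (e (a + k) ⟨k, hk⟩).2 + (e (a + k + 1) ⟨k, hk⟩).1 = (m : ZMod (n+1)) := by
  have hsp := nash_semiperfect n hn e he
  intro k
  induction k with
  | zero =>
    intro _ hk
    refine ⟨0, le_refl 0, ?_⟩
    have h1 := (hsp (a + 1)).1 (by omega)
    simp only [Nat.cast_zero, add_zero]
    rw [ha, h1]
    simp
  | succ k ih =>
    intro hk1 hklt
    have hkl : k < n - 1 := by omega
    obtain ⟨m, hm, heq⟩ := ih (by omega) hkl
    have h2 := (hsp (a + k + 1)).2.1 k (by omega)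
    have e1 : a + (k : ℤ) + 1 - 1 = a + k := by ring
    rw [e1] at h2
    have e2 : a + ((k : ℕ) + 1 : ℕ) = a + (k : ℤ) + 1 := by push_cast; ring
    simp only [Set.mem_insert_iff, Set.mem_singleton_iff] at h2
    rcases h2 with h2 | h2
    · refine ⟨m, by omega, ?_⟩
      simp only [e2]
      linear_combination heq + h2
    · refine ⟨m + 1, by omega, ?_⟩
      simp only [e2]
      push_cast
      linear_combination heq + h2
end

section
/- For n ≥ 3 and integers a, b, G_n ⊨ a ∥ b if and only if |a − b| ≠ n and a ≠ b. -/
lemma mem01 {n : ℕ} {x : ZMod (n+1)} (h : x = 0 ∨ x = 1) :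
    x ∈ ({0, 1} : Set (ZMod (n+1))) := by
  rcases h with h | h <;> simp [h]

lemma exists_good {n : ℕ} (hn : 3 ≤ n) (x z : GnS n) : ∃ y : GnS n, GnCond n x y z := by
  have h1 : 0 < n - 1 := by omega
  have h2 : n - 2 < n - 1 := by omega
  classical
  refine ⟨fun jf => (if jf.val = 0 then 0 else (z ⟨0, h1⟩).2 - (x ⟨n-2, h2⟩).2,
    if h : jf.val - 1 < n - 1 ∧ jf.val ≠ 0 then
      (x ⟨jf.val - 1, h.1⟩).2
        + (if jf.val - 1 = 0 then 0 else (z ⟨0, h1⟩).2 - (x ⟨n-2, h2⟩).2)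
        - (z ⟨jf.val, by omega⟩).1
    else 0), ?_, ?_, ?_⟩
  · intro h0; simp
  · intro j h
    apply mem01; left
    have hj : j + 1 - 1 < n - 1 ∧ j + 1 ≠ 0 := by omega
    simp only [dif_pos hj]
    simp only [Nat.add_sub_cancel]
    ring
  · intro h
    apply mem01; left
    beta_reduce
    rw [if_neg (by omega : ¬ (n-2 = 0))]
    ring

lemma nash_iff_s16 {n : ℕ} (hn : 3 ≤ n) (e : ℤ → GnS n) :
    NashEq (GnGame n) e ↔ ∀ i, GnCond n (e (i-1)) (e i) (e (i+1)) := by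
  constructor
  · intro hN i
    by_contra hc
    obtain ⟨y, hy⟩ := exists_good hn (e (i-1)) (e (i+1))
    have h := hN i y
    simp only [GnGame] at h
    rw [if_pos hy, if_neg hc] at h
    linarith
  · intro h i s
    simp only [GnGame]
    rw [if_pos (h i)]
    split <;> norm_num

lemma chain_ne {n : ℕ} (hn : 3 ≤ n) (h0 : 0 < n - 1) (e : ℤ → GnS n)
    (he : ∀ i, GnCond n (e (i-1)) (e i) (e (i+1))) (a : ℤ) :
    (e (a + n) ⟨0, h0⟩).2 - (e a ⟨0, h0⟩).2 ≠ -1 := by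
  classical
  set f : ℕ → ZMod (n+1) := fun m =>
    if h : m < n - 1 then (e (a + m) ⟨m, h⟩).2 + (e (a + 1 + m) ⟨m, h⟩).1
    else (e (a + n) ⟨0, h0⟩).2 with hf
  have key : ∀ m, m ≤ n - 1 → ∃ k, k ≤ m ∧ f m - f 0 = (k : ZMod (n+1)) := by
    intro m
    induction m with
    | zero => intro _; exact ⟨0, le_refl _, by simp⟩
    | succ m ih =>
      intro hm
      obtain ⟨k, hk, hfk⟩ := ih (by omega)
      have hstep : f (m+1) - f m ∈ ({0,1} : Set (ZMod (n+1))) := by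
        rcases lt_or_ge (m+1) (n-1) with hlt | hge
        · have hm' : m < n - 1 := by omega
          have hmid := (he (a + 1 + m)).2.1 m hlt
          have p1 : a + 1 + (m:ℤ) - 1 = a + m := by ring
          have p2 : a + 1 + (m:ℤ) + 1 = a + 1 + ((m:ℕ)+1 : ℕ) := by push_cast; ring
          have p3 : a + 1 + (m:ℤ) = a + ((m:ℕ)+1 : ℕ) := by push_cast; ring
          rw [p1] at hmid
          simp only [hf, dif_pos hlt, dif_pos hm']
          have : (e (a + ((m:ℕ)+1:ℕ)) ⟨m+1, hlt⟩).2 + (e (a + 1 + ((m:ℕ)+1:ℕ)) ⟨m+1, hlt⟩).1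
              - ((e (a + m) ⟨m, hm'⟩).2 + (e (a + 1 + m) ⟨m, hm'⟩).1)
              = (e (a+1+(m:ℤ)) ⟨m+1, hlt⟩).2 + (e (a+1+(m:ℤ)+1) ⟨m+1, hlt⟩).1
              - (e (a + m) ⟨m, hm'⟩).2 - (e (a+1+(m:ℤ)) ⟨m, hm'⟩).1 := by
            rw [p2, p3]; ring
          rw [this]
          exact hmid
        · -- m + 1 = n - 1, wrap step
          have hm1 : m + 1 = n - 1 := le_antisymm hm hge
          have hm' : m = n - 2 := by
            rw [Nat.eq_sub_of_add_eq hm1, Nat.sub_sub]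
          subst hm'
          have h2 : n - 2 < n - 1 := by omega
          have hlast := (he (a + n - 1)).2.2 h2
          have p1 : a + (n:ℤ) - 1 + 1 = a + n := by ring
          have p2 : a + (n:ℤ) - 1 - 1 = a + ((n-2 : ℕ) : ℤ) := by omega
          have p3 : a + (n:ℤ) - 1 = a + 1 + ((n-2 : ℕ) : ℤ) := by omega
          rw [p1, p2, p3] at hlast
          simp only [hf, dif_neg (by omega : ¬ (n - 2 + 1 < n - 1)), dif_pos h2]
          have : (e (a + n) ⟨0, h0⟩).2 - ((e (a + (n-2:ℕ)) ⟨n-2, h2⟩).2 + (e (a+1+(n-2:ℕ)) ⟨n-2, h2⟩).1)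
              = (e (a + n) ⟨0, lt_of_le_of_lt (Nat.zero_le _) h2⟩).2
                - (e (a + (n-2:ℕ)) ⟨n-2, h2⟩).2 - (e (a+1+(n-2:ℕ)) ⟨n-2, h2⟩).1 := by ring
          rw [this]
          exact hlast
      have hstep' : f (m+1) - f m = 0 ∨ f (m+1) - f m = 1 := by
        simpa [Set.mem_insert_iff] using hstep
      have hsplit : f (m+1) - f 0 = (f (m+1) - f m) + (f m - f 0) := by ring
      rcases hstep' with hs | hs
      · exact ⟨k, by omega, by rw [hsplit, hs, hfk]; ring⟩
      · exact ⟨k + 1, by omega, by rw [hsplit, hs, hfk]; push_cast; ring⟩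
  intro hcon
  obtain ⟨k, hk, hfk⟩ := key (n-1) le_rfl
  have hf0 : f 0 = (e a ⟨0, h0⟩).2 := by
    simp only [hf, dif_pos h0, Nat.cast_zero, add_zero]
    rw [(he (a+1)).1 h0, add_zero]
  have hfn : f (n-1) = (e (a+n) ⟨0, h0⟩).2 := by
    simp only [hf, dif_neg (lt_irrefl (n-1))]
  rw [hf0, hfn, hcon] at hfk
  have hn1 : ((n : ℕ) : ZMod (n+1)) = -1 := by
    have h' : (((n:ℕ) + 1 : ℕ) : ZMod (n+1)) = 0 := ZMod.natCast_self (n+1)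
    push_cast at h'
    linear_combination h'
  have : ((k : ℕ) : ZMod (n+1)) = ((n : ℕ) : ZMod (n+1)) := by rw [hn1, ← hfk]
  have hvk := ZMod.val_cast_of_lt (show k < n + 1 by omega)
  have hvn := ZMod.val_cast_of_lt (show n < n + 1 by omega)
  rw [this, hvn] at hvk
  omega

lemma main_ex {n : ℕ} (hn : 3 ≤ n) (h0 : 0 < n - 1) {a b : ℤ} (hab : a < b)
    (hbn : b - a ≠ (n:ℤ)) (P Q : GnS n)
    (hP : (P ⟨0, h0⟩).1 = 0) (hQ : (Q ⟨0, h0⟩).1 = 0) :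
    ∃ e : ℤ → GnS n, (∀ i, GnCond n (e (i-1)) (e i) (e (i+1))) ∧ e a = P ∧ e b = Q := by
  classical
  set N : ℤ := (n:ℤ) with hN
  have hN3 : (3:ℤ) ≤ N := by omega
  have hNz : N ≠ 0 := by omega
  set P1 : ℕ → ZMod (n+1) := fun j => if h : j < n-1 then (P ⟨j,h⟩).1 else 0 with hP1
  set P2 : ℕ → ZMod (n+1) := fun j => if h : j < n-1 then (P ⟨j,h⟩).2 else 0 with hP2
  set Q1 : ℕ → ZMod (n+1) := fun j => if h : j < n-1 then (Q ⟨j,h⟩).1 else 0 with hQ1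
  set Q2 : ℕ → ZMod (n+1) := fun j => if h : j < n-1 then (Q ⟨j,h⟩).2 else 0 with hQ2
  set d : ℕ := if (b - a) % N = 0 then (Q2 0 - P2 0).val else 0 with hd
  have hdn : d ≤ n := by
    rw [hd]; split
    · exact Nat.lt_succ_iff.mp (ZMod.val_lt _)
    · omega
  have hdle : (d:ℤ) ≤ N := by omega
  set t : ℤ → ℤ → ℤ := fun i j => (N-1) * ((i - j - (a+1)) / N) + j with ht
  set χ : ℤ → ℤ → ZMod (n+1) := fun i j =>
    if (i - j) % N = (a+1) % N then ((min (max (t i j) 0) (d:ℤ)).toNat : ZMod (n+1)) else 0 with hχ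
  set G : ℤ → ZMod (n+1) := fun m =>
    if m = (b+1) % N then Q2 0 - χ (b+1) 0
    else if b = a+1 then P2 ((a+1-m) % N).toNat + Q1 ((a+1-m) % N).toNat
    else if m = (a+1) % N then P2 0 else 0 with hG
  set γ : ℤ → ZMod (n+1) := fun c => G (c % N) with hγ
  set α : ℤ → ℕ → ZMod (n+1) := fun i j =>
    if j = 0 then 0 else
    if i = a then P1 j else
    if i = b then Q1 j else
    if i = a+1 then γ (a+1-(j:ℤ)) - P2 j else
    if i = b+1 then γ (b+1-(j:ℤ)) - (Q2 j - χ (b+1) (j:ℤ)) else 0 with hα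
  -- step lemma for the clamp function
  have hstep01 : ∀ u : ℤ,
      ((min (max (u+1) 0) (d:ℤ)).toNat : ZMod (n+1)) - ((min (max u 0) (d:ℤ)).toNat : ZMod (n+1)) = 0
      ∨ ((min (max (u+1) 0) (d:ℤ)).toNat : ZMod (n+1)) - ((min (max u 0) (d:ℤ)).toNat : ZMod (n+1)) = 1 := by
    intro u
    rcases (by omega : (min (max (u+1) 0) (d:ℤ)).toNat = (min (max u 0) (d:ℤ)).toNat ∨
        (min (max (u+1) 0) (d:ℤ)).toNat = (min (max u 0) (d:ℤ)).toNat + 1) with hh | hh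
    · left; rw [hh]; ring
    · right; rw [hh]; push_cast; ring
  have hS1 : ∀ i j : ℤ, χ (i+1) (j+1) - χ i j = 0 ∨ χ (i+1) (j+1) - χ i j = 1 := by
    intro i j
    have ht1 : t (i+1) (j+1) = t i j + 1 := by
      simp only [ht]
      rw [show i+1-(j+1)-(a+1) = i - j - (a+1) by ring]
      ring
    simp only [hχ, ht1, show i+1-(j+1) = i - j by ring]
    by_cases hcc : (i - j) % N = (a+1) % N
    · rw [if_pos hcc, if_pos hcc]
      exact hstep01 (t i j)
    · rw [if_neg hcc, if_neg hcc]; left; ring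
  have hsubN : ∀ x : ℤ, (x - N) % N = x % N := by
    intro x
    rw [Int.sub_emod, Int.emod_self, sub_zero, Int.emod_emod_of_dvd _ dvd_rfl]
  have hS2 : ∀ i : ℤ, χ (i+2) 0 - χ i (N-2) = 0 ∨ χ (i+2) 0 - χ i (N-2) = 1 := by
    intro i
    have hc : (i - (N-2)) % N = (i + 2 - 0) % N := by
      rw [show i - (N-2) = (i + 2 - 0) - N by ring, hsubN]
    have hdiv : ∀ x : ℤ, (x - N)/N = x/N - 1 := by
      intro x
      rw [show x - N = x + (-1)*N by ring, Int.add_mul_ediv_right _ _ hNz]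
      ring
    have ht2 : t (i+2) 0 = t i (N-2) + 1 := by
      simp only [ht]
      rw [show i - (N-2) - (a+1) = (i+2-0-(a+1)) - N by ring, hdiv]
      ring
    simp only [hχ, ht2]
    by_cases hcc : (i + 2 - 0) % N = (a+1) % N
    · rw [if_pos hcc, if_pos (hc.trans hcc)]
      exact hstep01 (t i (N-2))
    · rw [if_neg hcc, if_neg (fun hx => hcc (hc.symm.trans hx))]; left; ring
  have hγper : ∀ c₁ c₂ : ℤ, c₁ % N = c₂ % N → γ c₁ = γ c₂ := by
    intro c₁ c₂ h
    simp only [hγ, h]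
  have hc1iff : (a+1) % N = (b+1) % N ↔ (b - a) % N = 0 := by
    rw [Int.emod_eq_emod_iff_emod_sub_eq_zero, show a+1-(b+1) = -(b-a) by ring]
    constructor
    · intro h; exact Int.emod_eq_zero_of_dvd (dvd_neg.mp (Int.dvd_of_emod_eq_zero h))
    · intro h; exact Int.emod_eq_zero_of_dvd (dvd_neg.mpr (Int.dvd_of_emod_eq_zero h))
  have hχa : ∀ j : ℕ, j < n - 1 → χ (a+1) (j:ℤ) = 0 := by
    intro j hj
    by_cases hj0 : j = 0
    · subst hj0
      simp only [hχ]
      rw [if_pos (by rw [Nat.cast_zero, sub_zero])]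
      have htt : t (a+1) ((0:ℕ):ℤ) = 0 := by
        simp only [ht]
        rw [show a+1-((0:ℕ):ℤ)-(a+1) = 0 by push_cast; ring, Int.zero_ediv]
        push_cast; ring
      rw [htt]
      simp
    · simp only [hχ]
      have hne : ¬ ((a+1 - (j:ℤ)) % N = (a+1) % N) := by
        intro hcc
        rw [Int.emod_eq_emod_iff_emod_sub_eq_zero,
          show a+1-(j:ℤ)-(a+1) = -(j:ℤ) by ring] at hcc
        have hdd := dvd_neg.mp (Int.dvd_of_emod_eq_zero hcc)
        have := Int.le_of_dvd (by omega) hdd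
        omega
      rw [if_neg hne]
  have hχb0 : (b - a) % N = 0 → χ (b+1) 0 = Q2 0 - P2 0 := by
    intro hdvd
    obtain ⟨k, hk⟩ := Int.dvd_of_emod_eq_zero hdvd
    have hba : 0 < b - a := by omega
    have hk1 : 1 ≤ k := by nlinarith
    have hk2 : 2 ≤ k := by
      rcases eq_or_lt_of_le hk1 with h1 | h1
      · exact absurd (by rw [hk, ← h1, mul_one, hN] : b - a = (n:ℤ)) hbn
      · omega
    simp only [hχ]
    rw [if_pos (by rw [sub_zero]; exact (hc1iff.mpr hdvd).symm)]
    have htb : t (b+1) 0 = (N-1)*k := by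
      simp only [ht]
      rw [show b+1-0-(a+1) = b - a by ring, hk, Int.mul_ediv_cancel_left _ hNz]
      ring
    rw [htb, max_eq_left (by nlinarith), min_eq_right (by nlinarith), Int.toNat_natCast,
      hd, if_pos hdvd]
    simp
  have hQ10 : Q1 0 = 0 := by simp only [hQ1]; rw [dif_pos h0]; exact hQ
  have hγa1 : γ (a+1) = P2 0 := by
    simp only [hγ, hG]
    by_cases hc1 : (a+1) % N = (b+1) % N
    · rw [if_pos hc1, hχb0 (hc1iff.mp hc1)]; ring
    · rw [if_neg hc1]
      by_cases hb1 : b = a+1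
      · rw [if_pos hb1]
        have hidx : ((a+1 - (a+1) % N) % N).toNat = 0 := by
          rw [Int.sub_emod, Int.emod_emod_of_dvd _ dvd_rfl, sub_self, Int.zero_emod]
          rfl
        rw [hidx, hQ10, add_zero]
      · rw [if_neg hb1]; simp
  have hγaj : b = a + 1 → ∀ j : ℕ, j ≠ 0 → j < n-1 → γ (a+1-(j:ℤ)) = P2 j + Q1 j := by
    intro hb1 j hj0 hj
    simp only [hγ, hG]
    have hne : ¬ ((a+1-(j:ℤ)) % N = (b+1) % N) := by
      intro hcc
      rw [Int.emod_eq_emod_iff_emod_sub_eq_zero, hb1,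
        show a+1-(j:ℤ)-(a+1+1) = -((j:ℤ)+1) by ring] at hcc
      have hdd := dvd_neg.mp (Int.dvd_of_emod_eq_zero hcc)
      have := Int.le_of_dvd (by omega) hdd
      omega
    rw [if_neg hne, if_pos hb1]
    have hidx : ((a+1-((a+1-(j:ℤ)) % N)) % N).toNat = j := by
      rw [Int.sub_emod (a+1) _ N, Int.emod_emod_of_dvd _ dvd_rfl, ← Int.sub_emod,
        show a+1-(a+1-(j:ℤ)) = (j:ℤ) by ring,
        Int.emod_eq_of_lt (by omega) (by omega), Int.toNat_natCast]
    rw [hidx]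
  refine ⟨fun i jf => (α i jf.val, γ (i+1-(jf.val:ℤ)) + χ (i+1) (jf.val:ℤ) - α (i+1) jf.val),
    ?_, ?_, ?_⟩
  · intro i
    refine ⟨?_, ?_, ?_⟩
    · intro hh
      show α i 0 = 0
      simp [hα]
    · intro j h
      apply mem01
      show (γ (i+1-((j+1:ℕ):ℤ)) + χ (i+1) ((j+1:ℕ):ℤ) - α (i+1) (j+1)) + α (i+1) (j+1)
          - (γ (i-1+1-((j:ℕ):ℤ)) + χ (i-1+1) ((j:ℕ):ℤ) - α (i-1+1) j) - α i j = 0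
        ∨ (γ (i+1-((j+1:ℕ):ℤ)) + χ (i+1) ((j+1:ℕ):ℤ) - α (i+1) (j+1)) + α (i+1) (j+1)
          - (γ (i-1+1-((j:ℕ):ℤ)) + χ (i-1+1) ((j:ℕ):ℤ) - α (i-1+1) j) - α i j = 1
      rw [show ((j+1:ℕ):ℤ) = (j:ℤ)+1 by push_cast; ring,
          show i-1+1 = i by ring,
          show i+1-((j:ℤ)+1) = i - (j:ℤ) by ring]
      rcases hS1 i (j:ℤ) with hs | hs
      · left; linear_combination hs
      · right; linear_combination hs
    · intro h
      apply mem01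
      show (γ (i+1+1-((0:ℕ):ℤ)) + χ (i+1+1) ((0:ℕ):ℤ) - α (i+1+1) 0)
          - (γ (i-1+1-((n-2:ℕ):ℤ)) + χ (i-1+1) ((n-2:ℕ):ℤ) - α (i-1+1) (n-2)) - α i (n-2) = 0
        ∨ (γ (i+1+1-((0:ℕ):ℤ)) + χ (i+1+1) ((0:ℕ):ℤ) - α (i+1+1) 0)
          - (γ (i-1+1-((n-2:ℕ):ℤ)) + χ (i-1+1) ((n-2:ℕ):ℤ) - α (i-1+1) (n-2)) - α i (n-2) = 1
      rw [show ((0:ℕ):ℤ) = 0 from Nat.cast_zero,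
          show ((n-2:ℕ):ℤ) = N - 2 by omega,
          show i-1+1 = i by ring,
          show i+1+1 = i+2 by ring,
          show i+2-(0:ℤ) = i+2 by ring]
      have hα0 : α (i+2) 0 = 0 := by simp [hα]
      have hγeq : γ (i+2) = γ (i - (N-2)) :=
        hγper _ _ (by rw [show i - (N-2) = (i+2) - N by ring, hsubN])
      rcases hS2 i with hs | hs
      · left; linear_combination hs + hγeq - hα0
      · right; linear_combination hs + hγeq - hα0
  · funext jf
    obtain ⟨j, hj⟩ := jf
    refine Prod.ext ?_ ?_
    · show α a j = (P ⟨j, hj⟩).1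
      by_cases hj0 : j = 0
      · subst hj0
        have h1 : α a 0 = 0 := by simp [hα]
        rw [h1]; exact hP.symm
      · simp only [hα]
        rw [if_neg hj0]
        simp [hP1, hj]
    · show γ (a+1-(j:ℤ)) + χ (a+1) (j:ℤ) - α (a+1) j = (P ⟨j, hj⟩).2
      rw [hχa j hj, add_zero]
      by_cases hj0 : j = 0
      · subst hj0
        have h1 : α (a+1) 0 = 0 := by simp [hα]
        rw [h1, sub_zero, show a+1-((0:ℕ):ℤ) = a+1 by push_cast; ring, hγa1]
        simp only [hP2]; rw [dif_pos hj]
      · by_cases hb1 : b = a+1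
        · have h1 : α (a+1) j = Q1 j := by
            simp only [hα]
            rw [if_neg hj0, if_neg (by omega : ¬ a+1 = a), if_pos hb1.symm]
          rw [h1, hγaj hb1 j hj0 hj]
          simp only [hP2]; rw [dif_pos hj]; ring
        · have h1 : α (a+1) j = γ (a+1-(j:ℤ)) - P2 j := by
            simp only [hα]
            rw [if_neg hj0, if_neg (by omega : ¬ a+1 = a),
              if_neg (fun hh => hb1 hh.symm)]
            simp
          rw [h1]
          simp only [hP2]; rw [dif_pos hj]; ring
  · funext jf
    obtain ⟨j, hj⟩ := jf
    refine Prod.ext ?_ ?_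
    · show α b j = (Q ⟨j, hj⟩).1
      by_cases hj0 : j = 0
      · subst hj0
        have h1 : α b 0 = 0 := by simp [hα]
        rw [h1]; exact hQ.symm
      · simp only [hα]
        rw [if_neg hj0, if_neg (by omega : ¬ b = a)]
        simp [hQ1, hj]
    · show γ (b+1-(j:ℤ)) + χ (b+1) (j:ℤ) - α (b+1) j = (Q ⟨j, hj⟩).2
      by_cases hj0 : j = 0
      · subst hj0
        have h1 : α (b+1) 0 = 0 := by simp [hα]
        have h2 : γ (b+1) = Q2 0 - χ (b+1) 0 := by
          simp only [hγ, hG]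
          simp
        rw [h1, sub_zero, show b+1-((0:ℕ):ℤ) = b+1 by push_cast; ring,
          show ((0:ℕ):ℤ) = 0 from Nat.cast_zero, h2]
        simp only [hQ2]; rw [dif_pos hj]; ring
      · have h1 : α (b+1) j = γ (b+1-(j:ℤ)) - (Q2 j - χ (b+1) (j:ℤ)) := by
          simp only [hα]
          rw [if_neg hj0, if_neg (by omega : ¬ b+1 = a), if_neg (by omega : ¬ b+1 = b),
            if_neg (by omega : ¬ b+1 = a+1)]
          simp
        rw [h1]
        simp only [hQ2]; rw [dif_pos hj]; ring

theorem gn_inter (n : ℕ) (hn : 3 ≤ n) (a b : ℤ) :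
    Ichg (GnGame n) a b ↔ (|a - b| ≠ (n : ℤ) ∧ a ≠ b) := by
  have h0 : 0 < n - 1 := by omega
  have hNv : ∀ v : ZMod (n+1), NashEq (GnGame n) (fun _ _ => (0, v)) := by
    intro v
    refine (nash_iff_s16 hn _).2 (fun i => ⟨fun _ => rfl, fun j h => mem01 (Or.inl ?_),
      fun h => mem01 (Or.inl ?_)⟩)
    · show v + 0 - v - 0 = 0; ring
    · show v - v - 0 = 0; ring
  constructor
  · intro hI
    constructor
    · intro habs
      rcases (abs_eq (by positivity : (0:ℤ) ≤ (n:ℤ))).mp habs with hd | hd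
      · -- a = b + n
        obtain ⟨e, he, h1, h2⟩ := hI (fun _ _ => (0, -1)) (fun _ _ => (0, 0)) (hNv (-1)) (hNv 0)
        have hsp := (nash_iff_s16 hn e).1 he
        have hch := chain_ne hn h0 e hsp b
        apply hch
        have hba : b + (n:ℤ) = a := by omega
        rw [hba]
        have g1 : (e a ⟨0,h0⟩).2 = -1 := by rw [h1]
        have g2 : (e b ⟨0,h0⟩).2 = 0 := by rw [h2]
        rw [g1, g2]; ring
      · -- b = a + n
        obtain ⟨e, he, h1, h2⟩ := hI (fun _ _ => (0, 0)) (fun _ _ => (0, -1)) (hNv 0) (hNv (-1))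
        have hsp := (nash_iff_s16 hn e).1 he
        have hch := chain_ne hn h0 e hsp a
        apply hch
        have hba : a + (n:ℤ) = b := by omega
        rw [hba]
        have g1 : (e b ⟨0,h0⟩).2 = -1 := by rw [h2]
        have g2 : (e a ⟨0,h0⟩).2 = 0 := by rw [h1]
        rw [g1, g2]; ring
    · intro heq
      obtain ⟨e, he, h1, h2⟩ := hI (fun _ _ => (0, 0)) (fun _ _ => (0, 1)) (hNv 0) (hNv 1)
      rw [← heq] at h2
      have h3 := congrFun (h1.symm.trans h2) ⟨0, h0⟩
      have h4 : (0 : ZMod (n+1)) = 1 := congrArg Prod.snd h3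
      haveI : Fact (1 < n+1) := ⟨by omega⟩
      exact one_ne_zero h4.symm
  · rintro ⟨h1, h2⟩ e₁ e₂ hN1 hN2
    have hc1 := (nash_iff_s16 hn e₁).1 hN1
    have hc2 := (nash_iff_s16 hn e₂).1 hN2
    rcases lt_or_gt_of_ne h2 with h | h
    · obtain ⟨e, hc, hea, heb⟩ := main_ex hn h0 h
        (by intro hh; exact h1 (by rw [abs_sub_comm, hh, abs_of_nonneg (by positivity : (0:ℤ) ≤ (n:ℤ))]))
        (e₁ a) (e₂ b) ((hc1 a).1 h0) ((hc2 b).1 h0)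
      exact ⟨e, (nash_iff_s16 hn e).2 hc, hea, heb⟩
    · obtain ⟨e, hc, heb, hea⟩ := main_ex hn h0 h
        (by intro hh; exact h1 (by rw [hh, abs_of_nonneg (by positivity : (0:ℤ) ≤ (n:ℤ))]))
        (e₂ b) (e₁ a) ((hc2 b).1 h0) ((hc1 a).1 h0)
      exact ⟨e, (nash_iff_s16 hn e).2 hc, hea, heb⟩
end

section
/- If each cellular game in a finite family {Gⁱ}_{i=1}^n has at least one Nash equilibrium, then for any integers a, b, the product game ∏ᵢ Gⁱ ⊨ a ∥ b if and only if Gⁱ ⊨ a ∥ b for every i ≤ n. -/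
noncomputable def ProdGame {m : ℕ} (G : Fin m → CellularGame) : CellularGame :=
  ⟨∀ i : Fin m, (G i).S, fun x y z => ∑ i : Fin m, (G i).u (x i) (y i) (z i)⟩

/-!
Pay-offs of the product add up and a deviation in one component leaves the others untouched, so a
profile of the product is a Nash equilibrium exactly when each of its coordinates is. Interchangeable
equilibria of the components therefore assemble coordinatewise into one of the product. Conversely,
an equilibrium of a single component becomes one of the product once the other coordinates are
filled with fixed equilibria of their own games, and projecting back recovers the component.
-/

open Function

lemma Finset.sum_update_sub_sum {ι M : Type*} [Fintype ι] [DecidableEq ι] [AddCommGroup M]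
    {β : ι → Type*} (f : ∀ i, β i → M) (x : ∀ i, β i) (i : ι) (s : β i) :
    ∑ j, f j (update x i s j) - ∑ j, f j (x j) = f i s - f i (x i) := by
  rw [← Finset.sum_sub_distrib, Finset.sum_eq_single i]
  · simp
  · intro j _ hji
    simp [update_of_ne hji]
  · simp

section ProdGame

variable {m : ℕ} {G : Fin m → CellularGame}

lemma nashEq_prodGame_iff (e : ℤ → (ProdGame G).S) :
    NashEq (ProdGame G) e ↔ ∀ i, NashEq (G i) (fun k => e k i) := by
  constructor
  · intro h i k s
    have hk : ∑ j, (G j).u (e (k - 1) j) (update (e k) i s j) (e (k + 1) j)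
        ≤ ∑ j, (G j).u (e (k - 1) j) (e k j) (e (k + 1) j) := h k (update (e k) i s)
    have hdiff := Finset.sum_update_sub_sum (β := fun j => (G j).S)
      (fun j y => (G j).u (e (k - 1) j) y (e (k + 1) j)) (e k) i s
    linarith
  · intro h k s
    exact Finset.sum_le_sum (s := Finset.univ) fun i _ => h i k (s i)

def embedAt (c : ∀ j, ℤ → (G j).S) (i : Fin m) (e : ℤ → (G i).S) : ℤ → (ProdGame G).S :=
  fun k => update (fun j => c j k) i (e k)

lemma nashEq_embedAt {c : ∀ j, ℤ → (G j).S} (hc : ∀ j, NashEq (G j) (c j)) {i : Fin m}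
    {e : ℤ → (G i).S} (he : NashEq (G i) e) : NashEq (ProdGame G) (embedAt c i e) := by
  rw [nashEq_prodGame_iff]
  intro j
  by_cases hji : j = i
  · subst hji
    simpa [embedAt] using he
  · simpa [embedAt, update_of_ne hji] using hc j

lemma embedAt_apply_self (c : ∀ j, ℤ → (G j).S) (i : Fin m) (e : ℤ → (G i).S) (k : ℤ) :
    embedAt c i e k i = e k :=
  update_self _ _ _

lemma Ichg.of_prodGame (hne : ∀ i, ∃ e : ℤ → (G i).S, NashEq (G i) e) {a b : ℤ}
    (h : Ichg (ProdGame G) a b) (i : Fin m) : Ichg (G i) a b := by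
  intro e₁ e₂ h₁ h₂
  choose c hc using hne
  obtain ⟨E, hE, hEa, hEb⟩ := h _ _ (nashEq_embedAt hc h₁) (nashEq_embedAt hc h₂)
  refine ⟨fun k => E k i, (nashEq_prodGame_iff E).mp hE i, ?_, ?_⟩
  · simp only [hEa, embedAt_apply_self]
  · simp only [hEb, embedAt_apply_self]

lemma Ichg.prodGame {a b : ℤ} (h : ∀ i, Ichg (G i) a b) : Ichg (ProdGame G) a b := by
  intro E₁ E₂ h₁ h₂
  rw [nashEq_prodGame_iff] at h₁ h₂
  choose f hf hfa hfb using fun i => h i _ _ (h₁ i) (h₂ i)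
  exact ⟨fun k i => f i k, (nashEq_prodGame_iff _).mpr hf, funext hfa, funext hfb⟩

end ProdGame

theorem prod_inter {m : ℕ} (G : Fin m → CellularGame)
    (hne : ∀ i : Fin m, ∃ e : ℤ → (G i).S, NashEq (G i) e) (a b : ℤ) :
    Ichg (ProdGame G) a b ↔ ∀ i : Fin m, Ichg (G i) a b :=
  ⟨fun h i => h.of_prodGame hne i, Ichg.prodGame⟩
end
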